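/- Given a commutative square k ∘ f = g ∘ h of functors in which f : A ⟶ B is initial and g : C ⟶ D is a discrete opfibration, there exists a unique functor ℓ : B ⟶ C such that ℓ ∘ f = h and g ∘ ℓ = k. -/

import Mathlib

/-!
Over each `b : B`, every arrow `s : f a ⟶ b` of `f / b` produces an object of `C` over `k b`:
the target of the unique lift of `k s` starting at `h a`. A morphism of `f / b` exhibits the
lift for its source as `h` of that morphism followed by the lift for its target, so uniqueness
of lifts makes this object invariant along morphisms, hence constant on the connected category
`f / b`; it is `ℓ b`, and `ℓ β` is the lift of `k β`. Any filler `ℓ'` sends `s` to a morphism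
lying over `k s`, so `ℓ' b` is that same lift, and a discrete opfibration is faithful, so the
morphisms of `ℓ'` are determined by `ℓ' ⋙ g = k`.
-/

open CategoryTheory

universe v₁ v₂ v₃ v₄ u₁ u₂ u₃ u₄

def IsDiscreteOpfibration {X B : Type*} [Category X] [Category B] (g : X ⥤ B) : Prop :=
  ∀ (x : X) (b : B) (u : g.obj x ⟶ b),
    ∃! p : Σ x' : X, x ⟶ x', ∃ h : g.obj p.1 = b, g.map p.2 = u ≫ eqToHom h.symm

theorem CategoryTheory.Functor.ext_of_comp_faithful {B : Type u₂} {C : Type u₃} {D : Type u₄}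
    [Category.{v₂} B] [Category.{v₃} C] [Category.{v₄} D] {l₁ l₂ : B ⥤ C} (G : C ⥤ D)
    [G.Faithful] (hobj : ∀ b, l₁.obj b = l₂.obj b) (hcomp : l₁ ⋙ G = l₂ ⋙ G) : l₁ = l₂ :=
  Functor.ext hobj fun b b' β => G.map_injective <| by
    simpa [eqToHom_map] using Functor.congr_hom hcomp β

namespace IsDiscreteOpfibration

variable {C : Type u₃} {D : Type u₄} [Category.{v₃} C] [Category.{v₄} D] {g : C ⥤ D}
  (hg : IsDiscreteOpfibration g)

noncomputable def lift (x : C) {d : D} (u : g.obj x ⟶ d) : Σ y : C, x ⟶ y :=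
  (hg x d u).exists.choose

theorem obj_lift_fst (x : C) {d : D} (u : g.obj x ⟶ d) : g.obj (hg.lift x u).1 = d :=
  (hg x d u).exists.choose_spec.choose

theorem map_lift_snd (x : C) {d : D} (u : g.obj x ⟶ d) :
    g.map (hg.lift x u).2 = u ≫ eqToHom (hg.obj_lift_fst x u).symm :=
  (hg x d u).exists.choose_spec.choose_spec

theorem lift_eq {x y : C} {d : D} (u : g.obj x ⟶ d) (w : x ⟶ y) (e : g.obj y = d)
    (hw : g.map w = u ≫ eqToHom e.symm) : hg.lift x u = ⟨y, w⟩ :=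
  (hg x d u).unique (hg x d u).exists.choose_spec ⟨e, hw⟩

theorem lift_fst_eq {x y : C} {d : D} (u : g.obj x ⟶ d) (w : x ⟶ y) (e : g.obj y = d)
    (hw : g.map w = u ≫ eqToHom e.symm) : (hg.lift x u).1 = y :=
  congrArg Sigma.fst (hg.lift_eq u w e hw)

theorem faithful (hg : IsDiscreteOpfibration g) : g.Faithful where
  map_injective {x y} w w' hww := by
    have hlift := (hg.lift_eq (g.map w) w rfl (by simp)).symm.trans
      (hg.lift_eq (g.map w) w' rfl (by simp [hww]))
    exact eq_of_heq (Sigma.mk.inj hlift).2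

end IsDiscreteOpfibration

namespace DiagonalFiller

variable {A : Type u₁} {B : Type u₂} {C : Type u₃} {D : Type u₄}
  [Category.{v₁} A] [Category.{v₂} B] [Category.{v₃} C] [Category.{v₄} D]
  {f : A ⥤ B} {g : C ⥤ D} {h : A ⥤ C} {k : B ⥤ D}
  (hg : IsDiscreteOpfibration g) (hsq : f ⋙ k = h ⋙ g)

def squareHom {b : B} (s : CostructuredArrow f b) : g.obj (h.obj s.left) ⟶ k.obj b :=
  eqToHom (Functor.congr_obj hsq s.left).symm ≫ k.map s.hom

noncomputable def objOf {b : B} (s : CostructuredArrow f b) : C :=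
  (hg.lift (h.obj s.left) (squareHom hsq s)).1

noncomputable def homOf {b : B} (s : CostructuredArrow f b) : h.obj s.left ⟶ objOf hg hsq s :=
  (hg.lift (h.obj s.left) (squareHom hsq s)).2

theorem obj_objOf {b : B} (s : CostructuredArrow f b) : g.obj (objOf hg hsq s) = k.obj b :=
  hg.obj_lift_fst _ _

theorem map_homOf {b : B} (s : CostructuredArrow f b) :
    g.map (homOf hg hsq s) = squareHom hsq s ≫ eqToHom (obj_objOf hg hsq s).symm :=
  hg.map_lift_snd _ _

theorem objOf_eq_of_hom {b : B} {s s' : CostructuredArrow f b} (t : s ⟶ s') :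
    objOf hg hsq s = objOf hg hsq s' := by
  refine hg.lift_fst_eq _ (h.map t.left ≫ homOf hg hsq s') (obj_objOf hg hsq s') ?_
  rw [Functor.map_comp, map_homOf, ← Functor.comp_map h g, Functor.congr_hom hsq.symm t.left]
  simp [squareHom, ← k.map_comp_assoc]

theorem lift_objOf_fst {b b' : B} (s : CostructuredArrow f b) (β : b ⟶ b') :
    (hg.lift (objOf hg hsq s) (eqToHom (obj_objOf hg hsq s) ≫ k.map β)).1 =
      objOf hg hsq (CostructuredArrow.mk (s.hom ≫ β)) := by
  refine (hg.lift_fst_eq _ (homOf hg hsq s ≫ (hg.lift _ _).2) (hg.obj_lift_fst _ _) ?_).symm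
  simp [map_homOf, hg.map_lift_snd, squareHom]

variable [f.Initial]

noncomputable def obj (b : B) : C :=
  objOf hg hsq (Classical.arbitrary (CostructuredArrow f b))

theorem objOf_eq_obj {b : B} (s : CostructuredArrow f b) : objOf hg hsq s = obj hg hsq b :=
  constant_of_preserves_morphisms (objOf hg hsq) (fun _ _ t => objOf_eq_of_hom hg hsq t) _ _

theorem eq_obj {b : B} (s : CostructuredArrow f b) {y : C} (w : h.obj s.left ⟶ y)
    (e : g.obj y = k.obj b) (hw : g.map w = squareHom hsq s ≫ eqToHom e.symm) :
    y = obj hg hsq b :=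
  (hg.lift_fst_eq _ w e hw).symm.trans (objOf_eq_obj hg hsq s)

theorem obj_obj (b : B) : g.obj (obj hg hsq b) = k.obj b :=
  hg.obj_lift_fst _ _

theorem lift_obj_fst {b b' : B} (β : b ⟶ b') :
    (hg.lift (obj hg hsq b) (eqToHom (obj_obj hg hsq b) ≫ k.map β)).1 = obj hg hsq b' :=
  (lift_objOf_fst hg hsq _ β).trans (objOf_eq_obj hg hsq _)

noncomputable def map {b b' : B} (β : b ⟶ b') : obj hg hsq b ⟶ obj hg hsq b' :=
  (hg.lift _ (eqToHom (obj_obj hg hsq b) ≫ k.map β)).2 ≫ eqToHom (lift_obj_fst hg hsq β)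

theorem map_map {b b' : B} (β : b ⟶ b') :
    g.map (map hg hsq β) =
      eqToHom (obj_obj hg hsq b) ≫ k.map β ≫ eqToHom (obj_obj hg hsq b').symm := by
  simp [map, hg.map_lift_snd, eqToHom_map]

noncomputable def filler : B ⥤ C :=
  haveI := hg.faithful
  { obj := obj hg hsq
    map := map hg hsq
    map_id := fun b => g.map_injective (by simp [map_map])
    map_comp := fun β γ => g.map_injective (by simp [map_map]) }

theorem filler_comp : filler hg hsq ⋙ g = k :=
  CategoryTheory.Functor.ext (obj_obj hg hsq) fun _ _ β => map_map hg hsq β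

theorem comp_filler : f ⋙ filler hg hsq = h := by
  have := hg.faithful
  refine Functor.ext_of_comp_faithful g (fun a => (eq_obj hg hsq (CostructuredArrow.mk (𝟙 _))
    (𝟙 (h.obj a)) (Functor.congr_obj hsq a).symm (by simp [squareHom])).symm) ?_
  rw [Functor.assoc, filler_comp, hsq]

theorem eq_filler {l : B ⥤ C} (hl : f ⋙ l = h) (hlg : l ⋙ g = k) : l = filler hg hsq := by
  have := hg.faithful
  refine Functor.ext_of_comp_faithful g (fun b => ?_) (hlg.trans (filler_comp hg hsq).symm)
  let s := Classical.arbitrary (CostructuredArrow f b)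
  refine eq_obj hg hsq s (eqToHom (Functor.congr_obj hl s.left).symm ≫ l.map s.hom)
    (Functor.congr_obj hlg b) ?_
  simp [squareHom, eqToHom_map, Functor.congr_hom hlg.symm s.hom]

end DiagonalFiller

/-- Orthogonality of initial functors and discrete opfibrations: any commutative
square `k ∘ f = g ∘ h` with `f` initial and `g` a discrete opfibration has a unique
diagonal filler. -/
theorem stmt14 {A B C D : Type} [SmallCategory A] [SmallCategory B]
    [SmallCategory C] [SmallCategory D]
    (f : A ⥤ B) (g : C ⥤ D) (h : A ⥤ C) (k : B ⥤ D)
    [f.Initial] (hg : IsDiscreteOpfibration g)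
    (hsq : f ⋙ k = h ⋙ g) :
    ∃! l : B ⥤ C, f ⋙ l = h ∧ l ⋙ g = k :=
  ⟨DiagonalFiller.filler hg hsq,
    ⟨DiagonalFiller.comp_filler hg hsq, DiagonalFiller.filler_comp hg hsq⟩,
    fun _ ⟨hl, hlg⟩ => DiagonalFiller.eq_filler hg hsq hl hlg⟩
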